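/- Let G be a group such that the set of torsion elements of G meets only finitely many conjugacy classes of G and every torsion element of G lies in the commutator subgroup [G,G]. If G is not uniformly perfect, i.e., for every natural number N there exists an element of G that cannot be written as a product of at most N commutators, then there is no natural number C such that every element of G can be written as a product of at most C torsion elements. -/

import Mathlib

/-- An element `x` of a group is a torsion element if `x ^ n = 1` for some `n > 0`. -/
def IsTorsionElt {G : Type*} [Group G] (x : G) : Prop := ∃ n : ℕ, 0 < n ∧ x ^ n = 1

open scoped commutatorElement

namespace AuxNoUTG

variable {G : Type*} [Group G]

/-- `x` is a product of at most `N` commutators. -/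
def PC (N : ℕ) (x : G) : Prop :=
  ∃ k ≤ N, ∃ a b : Fin k → G, x = (List.ofFn fun i => ⁅a i, b i⁆).prod

lemma pc_iff (N : ℕ) (x : G) :
    PC N x ↔ ∃ l : List G, l.length ≤ N ∧ (∀ y ∈ l, ∃ a b : G, y = ⁅a, b⁆) ∧ x = l.prod := by
  constructor
  · rintro ⟨k, hk, a, b, rfl⟩
    refine ⟨_, by simpa using hk, ?_, rfl⟩
    intro y hy
    rw [List.mem_ofFn] at hy
    obtain ⟨i, rfl⟩ := hy
    exact ⟨a i, b i, rfl⟩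
  · rintro ⟨l, hl, hmem, rfl⟩
    refine ⟨l.length, hl, fun i => (hmem (l.get i) (l.get_mem i)).choose,
      fun i => (hmem (l.get i) (l.get_mem i)).choose_spec.choose, ?_⟩
    congr 1
    conv_lhs => rw [← List.ofFn_get l]
    congr 1
    funext i
    exact (hmem (l.get i) (l.get_mem i)).choose_spec.choose_spec

lemma pc_mono {N M : ℕ} (h : N ≤ M) {x : G} : PC N x → PC M x := by
  rintro ⟨k, hk, rest⟩; exact ⟨k, hk.trans h, rest⟩

lemma pc_mul {N M : ℕ} {x y : G} (hx : PC N x) (hy : PC M y) : PC (N + M) (x * y) := by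
  rw [pc_iff] at *
  obtain ⟨l, hl, hm, rfl⟩ := hx
  obtain ⟨l', hl', hm', rfl⟩ := hy
  exact ⟨l ++ l', by simpa using Nat.add_le_add hl hl',
    fun y hy => ((List.mem_append.1 hy).elim (hm y) (hm' y)), (List.prod_append).symm⟩

lemma pc_one (N : ℕ) : PC N (1 : G) :=
  ⟨0, N.zero_le, fun _ => 1, fun _ => 1, by simp⟩

lemma pc_conj {N : ℕ} {x : G} (g : G) (h : PC N x) : PC N (g * x * g⁻¹) := by
  rw [pc_iff] at *
  obtain ⟨l, hl, hm, rfl⟩ := h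
  refine ⟨l.map (MulAut.conj g), by simpa using hl, ?_, ?_⟩
  · intro y hy
    rw [List.mem_map] at hy
    obtain ⟨z, hz, rfl⟩ := hy
    obtain ⟨a, b, rfl⟩ := hm z hz
    exact ⟨MulAut.conj g a, MulAut.conj g b, (map_commutatorElement _ _ _)⟩
  · rw [← map_list_prod (MulAut.conj g) l]
    simp [MulAut.conj_apply]

lemma pc_of_mem_commutator {x : G} (h : x ∈ commutator G) : ∃ N, PC N x := by
  rw [commutator_eq_closure] at h
  have h' : x ∈ Submonoid.closure (commutatorSet G ∪ (commutatorSet G)⁻¹) := by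
    rw [← Subgroup.closure_toSubmonoid]
    exact h
  obtain ⟨l, hmem, rfl⟩ := Submonoid.exists_list_of_mem_closure h'
  refine ⟨l.length, (pc_iff _ _).2 ⟨l, le_rfl, ?_, rfl⟩⟩
  intro y hy
  rcases hmem y hy with hy' | hy'
  · obtain ⟨a, b, hab⟩ := hy'
    exact ⟨a, b, hab.symm⟩
  · obtain ⟨a, b, hab⟩ := Set.mem_inv.1 hy'
    refine ⟨b, a, ?_⟩
    rw [← commutatorElement_inv, hab, inv_inv]

lemma pc_list_prod {K : ℕ} : ∀ l : List G, (∀ y ∈ l, PC K y) → PC (l.length * K) l.prod := by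
  intro l
  induction l with
  | nil => intro _; simpa using pc_one 0
  | cons a l ih =>
    intro h
    have := pc_mul (h a List.mem_cons_self) (ih (fun y hy => h y (List.mem_cons_of_mem a hy)))
    simpa [List.length_cons, Nat.succ_mul, Nat.add_comm] using this

end AuxNoUTG

open AuxNoUTG in
/-- If the torsion elements of `G` meet only finitely many conjugacy classes,
every torsion element lies in the commutator subgroup, and `G` is not uniformly perfect,
then there is no `C : ℕ` such that every element of `G` is a product of at most `C`
torsion elements. -/
theorem no_uniform_torsion_generation {G : Type*} [Group G]
    (hfin : ∃ S : Finset G, ∀ x : G, IsTorsionElt x → ∃ s ∈ S, IsConj s x)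
    (hcomm : ∀ x : G, IsTorsionElt x → x ∈ commutator G)
    (hnup : ∀ N : ℕ, ∃ x : G, ¬ ∃ k ≤ N, ∃ a b : Fin k → G, x = (List.ofFn fun i => ⁅a i, b i⁆).prod) :
    ¬ ∃ C : ℕ, ∀ x : G,
      ∃ m ≤ C, ∃ t : Fin m → G, (∀ i, IsTorsionElt (t i)) ∧ x = (List.ofFn t).prod := by
  rintro ⟨C, hC⟩
  obtain ⟨S, hS⟩ := hfin
  have key : ∀ s : G, ∃ N, s ∈ commutator G → PC N s := by
    intro s
    by_cases h : s ∈ commutator G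
    · obtain ⟨N, hN⟩ := pc_of_mem_commutator h
      exact ⟨N, fun _ => hN⟩
    · exact ⟨0, fun h' => absurd h' h⟩
  choose f hf using key
  set K := S.sup f with hK
  have htor : ∀ x : G, IsTorsionElt x → PC K x := by
    intro x hx
    obtain ⟨s, hsS, hconj⟩ := hS x hx
    obtain ⟨c, hc⟩ := isConj_iff.1 hconj
    have hst : IsTorsionElt s := by
      obtain ⟨n, hn, hxn⟩ := hx
      refine ⟨n, hn, ?_⟩
      have h1 : (c * s * c⁻¹) ^ n = 1 := by rw [hc]; exact hxn
      rw [conj_pow] at h1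
      have := congrArg (fun z => c⁻¹ * z * c) h1
      simpa [mul_assoc] using this
    have hpc : PC K s := pc_mono (Finset.le_sup hsS) (hf s (hcomm s hst))
    rw [← hc]
    exact pc_conj c hpc
  obtain ⟨x, hx⟩ := hnup (C * K)
  obtain ⟨m, hm, t, ht, rfl⟩ := hC x
  apply hx
  have h1 : PC ((List.ofFn t).length * K) (List.ofFn t).prod := by
    apply pc_list_prod
    intro y hy
    rw [List.mem_ofFn] at hy
    obtain ⟨i, rfl⟩ := hy
    exact htor _ (ht i)
  have h2 : (List.ofFn t).length * K ≤ C * K := by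
    simpa using Nat.mul_le_mul_right K hm
  exact pc_mono h2 h1
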